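/- arXiv:2312.02223 — 2 statements merged into one kernel-verified Lean document; each statement's English description precedes it below -/
import Mathlib

section
/- For every nonzero integer r and every non-negative integer n: (i) 2·Σ_{j=0}^{n} (−1)^{r(n−j)} L_{2rj} = Σ_{j=0}^{n} (L_r/2)^j (L_{r(2n−j)} + (−1)^{r(n−j)} L_{rj}) = 2·((−1)^{r+1} L_{2r(n+1)} − (−1)^{r(n+1)} L_{2r} + L_{2rn} + 2(−1)^{rn}) / ((−1)^{r+1}·5·F_r²); and (ii) 2·Σ_{j=0}^{n} (−1)^{r(n−j)} F_{2rj} = Σ_{j=0}^{n} (L_r/2)^j (F_{r(2n−j)} + (−1)^{r(n−j)} F_{rj}) = 2·((−1)^{r+1} F_{2r(n+1)} + (−1)^{r(n+1)} F_{2r} + F_{2rn}) / ((−1)^{r+1}·5·F_r²). -/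
/-!
Binet's formula turns `F k`, `L k` and `(-1) ^ k` into `(φ ^ k - ψ ^ k) / √5`, `φ ^ k + ψ ^ k`
and `φ ^ k ψ ^ k`, so every pointwise identity needed is a polynomial identity in powers of
`φ` and `ψ`. Multiplied by `F r`, the alternating sum telescopes,
`F r * ∑ (-1) ^ (r (n - j)) G (2 r j) = G (r n) F (r (n + 1))`,
for every `G = α φ ^ k + β ψ ^ k`, in particular for `G = F` and `G = L`. The product formula
`L b G a = G (a + b) + (-1) ^ b G (a - b)` factors the middle sum as
`G (r n) * ∑ (L r / 2) ^ j L (r (n - j))`, which telescopes to `2 G (r n) F (r (n + 1)) / F r`.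
The closed forms are Binet evaluations of `5 F r G (r n) F (r (n + 1))`.
-/

open Finset

/-- Integer-indexed Fibonacci numbers: `fibZ n = F n`, with
`F (-n) = (-1)^(n+1) * F n`. -/
def fibZ (n : ℤ) : ℤ :=
  if 0 ≤ n then (Nat.fib n.toNat : ℤ) else (-1) ^ (n.natAbs + 1) * (Nat.fib n.natAbs : ℤ)

/-- Integer-indexed Lucas numbers: `lucZ n = L n = F (n+1) + F (n-1)`. -/
def lucZ (n : ℤ) : ℤ := fibZ (n + 1) + fibZ (n - 1)

open Real goldenRatio

theorem fibZ_eq_fib : fibZ = Int.fib := by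
  funext n
  obtain ⟨k, rfl | rfl⟩ := n.eq_nat_or_neg
  · simp [fibZ]
  · simp [fibZ, Int.fib_neg_natCast]

theorem coe_fibZ (n : ℤ) : (fibZ n : ℝ) = (φ ^ n - ψ ^ n) / √5 := by
  rw [fibZ_eq_fib, coe_intFib_eq]

theorem coe_lucZ (n : ℤ) : (lucZ n : ℝ) = φ ^ n + ψ ^ n := by
  rw [lucZ, Int.cast_add, coe_fibZ, coe_fibZ, zpow_add_one₀ goldenRatio_ne_zero,
    zpow_add_one₀ goldenConj_ne_zero, zpow_sub_one₀ goldenRatio_ne_zero,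
    zpow_sub_one₀ goldenConj_ne_zero, inv_goldenRatio, inv_goldenConj,
    ← goldenRatio_sub_goldenConj]
  field_simp
  ring

theorem neg_one_zpow_eq_goldenRatio_zpow_mul_goldenConj_zpow (k : ℤ) :
    (-1 : ℝ) ^ k = φ ^ k * ψ ^ k := by
  rw [← mul_zpow, goldenRatio_mul_goldenConj]

theorem goldenRatio_zpow_mul_goldenConj_zpow_sq (k : ℤ) : (φ ^ k * ψ ^ k) ^ 2 = 1 := by
  rw [← neg_one_zpow_eq_goldenRatio_zpow_mul_goldenConj_zpow, ← zpow_natCast, ← zpow_mul,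
    mul_comm, zpow_mul]
  norm_num

theorem fibZ_mul_lucZ_add_lucZ_mul_fibZ (a b : ℤ) :
    (fibZ a : ℝ) * lucZ b + lucZ a * fibZ b = 2 * fibZ (a + b) := by
  simp only [coe_fibZ, coe_lucZ, zpow_add₀ goldenRatio_ne_zero, zpow_add₀ goldenConj_ne_zero]
  ring

theorem fibZ_mul_sum_lucZ_div_two_pow_mul (r : ℤ) (n : ℕ) :
    fibZ r * ∑ j ∈ range (n + 1), ((lucZ r : ℝ) / 2) ^ j * lucZ (r * ((n : ℤ) - j))
      = 2 * fibZ (r * (n + 1)) := by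
  induction n with
  | zero => norm_num [coe_lucZ, mul_comm]
  | succ n ih =>
    have hshift : ∀ j ∈ range (n + 1),
        ((lucZ r : ℝ) / 2) ^ (j + 1) * lucZ (r * ((n + 1 : ℕ) - (j + 1 : ℕ) : ℤ))
          = lucZ r / 2 * (((lucZ r : ℝ) / 2) ^ j * lucZ (r * ((n : ℤ) - j))) := by
      intro j _
      push_cast
      ring_nf
    rw [sum_range_succ', sum_congr rfl hshift, ← mul_sum, mul_add, mul_left_comm, ih]
    have step := fibZ_mul_lucZ_add_lucZ_mul_fibZ r (r * (n + 1))
    rw [show r + r * (n + 1) = r * (n + 1 + 1) by ring] at step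
    push_cast [sub_zero]
    linear_combination step

section BinetSequence

variable {G : ℤ → ℝ} {α β : ℝ}

theorem lucZ_mul_of_binet (hG : ∀ k, G k = α * φ ^ k + β * ψ ^ k) (a b : ℤ) :
    (lucZ b : ℝ) * G a = G (a + b) + (-1) ^ b * G (a - b) := by
  obtain ⟨c, rfl⟩ : ∃ c, a = c + b := ⟨a - b, by ring⟩
  simp only [hG, coe_lucZ, neg_one_zpow_eq_goldenRatio_zpow_mul_goldenConj_zpow,
    add_sub_cancel_right, zpow_add₀ goldenRatio_ne_zero, zpow_add₀ goldenConj_ne_zero]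
  ring

theorem neg_one_zpow_mul_add_fibZ_mul_of_binet (hG : ∀ k, G k = α * φ ^ k + β * ψ ^ k)
    (a r : ℤ) :
    (-1) ^ r * (G a * fibZ (a + r)) + fibZ r * G (2 * a + 2 * r)
      = G (a + r) * fibZ (a + 2 * r) := by
  simp only [hG, coe_fibZ, neg_one_zpow_eq_goldenRatio_zpow_mul_goldenConj_zpow, two_mul,
    zpow_add₀ goldenRatio_ne_zero, zpow_add₀ goldenConj_ne_zero]
  field_simp
  ring

theorem fibZ_mul_sum_neg_one_zpow_mul_of_binet (hG : ∀ k, G k = α * φ ^ k + β * ψ ^ k)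
    (r : ℤ) (n : ℕ) :
    fibZ r * ∑ j ∈ range (n + 1), (-1 : ℝ) ^ (r * ((n : ℤ) - j)) * G (2 * r * j)
      = G (r * n) * fibZ (r * (n + 1)) := by
  induction n with
  | zero => simp [mul_comm]
  | succ n ih =>
    have hshift : ∀ j ∈ range (n + 1),
        (-1 : ℝ) ^ (r * ((n + 1 : ℕ) - j : ℤ)) * G (2 * r * j)
          = (-1) ^ r * ((-1 : ℝ) ^ (r * ((n : ℤ) - j)) * G (2 * r * j)) := by
      intro j _
      rw [← mul_assoc, ← zpow_add₀ (by norm_num)]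
      congr 2
      push_cast
      ring
    rw [sum_range_succ, sum_congr rfl hshift, ← mul_sum, mul_add, mul_left_comm, ih, sub_self,
      mul_zero, zpow_zero, one_mul]
    have step := neg_one_zpow_mul_add_fibZ_mul_of_binet hG (r * n) r
    rw [show r * n + r = r * (n + 1) by ring, show 2 * (r * n) + 2 * r = 2 * r * (n + 1) by ring,
      show r * n + 2 * r = r * (n + 1 + 1) by ring] at step
    push_cast
    exact step

theorem fibZ_mul_sum_lucZ_div_two_pow_mul_add_of_binet
    (hG : ∀ k, G k = α * φ ^ k + β * ψ ^ k) (r : ℤ) (n : ℕ) :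
    fibZ r * ∑ j ∈ range (n + 1), ((lucZ r : ℝ) / 2) ^ j
        * (G (r * (2 * (n : ℤ) - j)) + (-1) ^ (r * ((n : ℤ) - j)) * G (r * (j : ℤ)))
      = 2 * G (r * n) * fibZ (r * (n + 1)) := by
  have hprod : ∀ j : ℕ,
      G (r * (2 * (n : ℤ) - j)) + (-1) ^ (r * ((n : ℤ) - j)) * G (r * (j : ℤ))
        = G (r * n) * lucZ (r * ((n : ℤ) - j)) := by
    intro j
    rw [mul_comm (G _), lucZ_mul_of_binet hG]
    ring_nf
  simp only [hprod, mul_left_comm _ (G _), ← mul_sum, fibZ_mul_sum_lucZ_div_two_pow_mul]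
  ring

end BinetSequence

/- In both closed forms `field_simp` leaves an identity that holds only modulo
`(φ ^ r ψ ^ r) ^ 2 = 1`. -/
theorem neg_one_zpow_mul_five_mul_fibZ_mul_fibZ_mul_fibZ (r n : ℤ) :
    (-1) ^ (r + 1) * 5 * fibZ r * (fibZ (r * n) * fibZ (r * (n + 1)) : ℝ)
      = (-1) ^ (r + 1) * fibZ (2 * r * (n + 1)) + (-1) ^ (r * (n + 1)) * fibZ (2 * r)
        + fibZ (2 * r * n) := by
  rw [zpow_add_one₀ (by norm_num), show (5 : ℝ) = √5 ^ 2 by simp]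
  simp only [coe_fibZ, neg_one_zpow_eq_goldenRatio_zpow_mul_goldenConj_zpow, mul_add, add_mul,
    mul_one, two_mul, zpow_add₀ goldenRatio_ne_zero, zpow_add₀ goldenConj_ne_zero]
  field_simp
  linear_combination ((φ ^ (r * n)) ^ 2 - (ψ ^ (r * n)) ^ 2)
    * goldenRatio_zpow_mul_goldenConj_zpow_sq r

theorem neg_one_zpow_mul_five_mul_fibZ_mul_lucZ_mul_fibZ (r n : ℤ) :
    (-1) ^ (r + 1) * 5 * fibZ r * (lucZ (r * n) * fibZ (r * (n + 1)) : ℝ)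
      = (-1) ^ (r + 1) * lucZ (2 * r * (n + 1)) - (-1) ^ (r * (n + 1)) * lucZ (2 * r)
        + lucZ (2 * r * n) + 2 * (-1) ^ (r * n) := by
  rw [zpow_add_one₀ (by norm_num), show (5 : ℝ) = √5 ^ 2 by simp]
  simp only [coe_fibZ, coe_lucZ, neg_one_zpow_eq_goldenRatio_zpow_mul_goldenConj_zpow, mul_add,
    add_mul, mul_one, two_mul, zpow_add₀ goldenRatio_ne_zero, zpow_add₀ goldenConj_ne_zero]
  field_simp
  linear_combination (φ ^ (r * n) + ψ ^ (r * n)) ^ 2 * goldenRatio_zpow_mul_goldenConj_zpow_sq r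

theorem thm4_sums (r : ℤ) (hr : r ≠ 0) (n : ℕ) :
    ((2 * ∑ j ∈ Finset.range (n + 1),
        (-1 : ℚ) ^ (r * ((n : ℤ) - j)) * (lucZ (2 * r * (j : ℤ)) : ℚ)
      = ∑ j ∈ Finset.range (n + 1),
        ((lucZ r : ℚ) / 2) ^ j
          * ((lucZ (r * (2 * (n : ℤ) - j)) : ℚ)
            + (-1 : ℚ) ^ (r * ((n : ℤ) - j)) * (lucZ (r * (j : ℤ)) : ℚ))) ∧
    (2 * ∑ j ∈ Finset.range (n + 1),
        (-1 : ℚ) ^ (r * ((n : ℤ) - j)) * (lucZ (2 * r * (j : ℤ)) : ℚ)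
      = 2 * ((-1 : ℚ) ^ (r + 1) * (lucZ (2 * r * ((n : ℤ) + 1)) : ℚ)
          - (-1 : ℚ) ^ (r * ((n : ℤ) + 1)) * (lucZ (2 * r) : ℚ)
          + (lucZ (2 * r * (n : ℤ)) : ℚ) + 2 * (-1 : ℚ) ^ (r * (n : ℤ)))
        / ((-1 : ℚ) ^ (r + 1) * 5 * (fibZ r : ℚ) ^ 2))) ∧
    ((2 * ∑ j ∈ Finset.range (n + 1),
        (-1 : ℚ) ^ (r * ((n : ℤ) - j)) * (fibZ (2 * r * (j : ℤ)) : ℚ)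
      = ∑ j ∈ Finset.range (n + 1),
        ((lucZ r : ℚ) / 2) ^ j
          * ((fibZ (r * (2 * (n : ℤ) - j)) : ℚ)
            + (-1 : ℚ) ^ (r * ((n : ℤ) - j)) * (fibZ (r * (j : ℤ)) : ℚ))) ∧
    (2 * ∑ j ∈ Finset.range (n + 1),
        (-1 : ℚ) ^ (r * ((n : ℤ) - j)) * (fibZ (2 * r * (j : ℤ)) : ℚ)
      = 2 * ((-1 : ℚ) ^ (r + 1) * (fibZ (2 * r * ((n : ℤ) + 1)) : ℚ)
          + (-1 : ℚ) ^ (r * ((n : ℤ) + 1)) * (fibZ (2 * r) : ℚ)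
          + (fibZ (2 * r * (n : ℤ)) : ℚ))
        / ((-1 : ℚ) ^ (r + 1) * 5 * (fibZ r : ℚ) ^ 2))) := by
  have hF : (fibZ r : ℝ) ≠ 0 := by simpa [fibZ_eq_fib] using hr
  have hD : (-1 : ℝ) ^ (r + 1) * 5 * (fibZ r : ℝ) ^ 2 ≠ 0 := by positivity
  have hFbinet : ∀ k, (fibZ k : ℝ) = (√5)⁻¹ * φ ^ k + -(√5)⁻¹ * ψ ^ k := fun k => by
    rw [coe_fibZ]; ring
  have hLbinet : ∀ k, (lucZ k : ℝ) = 1 * φ ^ k + 1 * ψ ^ k := fun k => by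
    rw [coe_lucZ]; ring
  have hLsum := fibZ_mul_sum_neg_one_zpow_mul_of_binet hLbinet r n
  have hFsum := fibZ_mul_sum_neg_one_zpow_mul_of_binet hFbinet r n
  have hLconv := fibZ_mul_sum_lucZ_div_two_pow_mul_add_of_binet hLbinet r n
  have hFconv := fibZ_mul_sum_lucZ_div_two_pow_mul_add_of_binet hFbinet r n
  have hLclosed := neg_one_zpow_mul_five_mul_fibZ_mul_lucZ_mul_fibZ r n
  have hFclosed := neg_one_zpow_mul_five_mul_fibZ_mul_fibZ_mul_fibZ r n
  refine ⟨⟨?_, ?_⟩, ?_, ?_⟩ <;> apply Rat.cast_injective (α := ℝ) <;> push_cast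
  · exact mul_left_cancel₀ hF (by linear_combination 2 * hLsum - hLconv)
  · rw [eq_div_iff hD]
    linear_combination (2 * (-1) ^ (r + 1) * 5 * (fibZ r : ℝ)) * hLsum + 2 * hLclosed
  · exact mul_left_cancel₀ hF (by linear_combination 2 * hFsum - hFconv)
  · rw [eq_div_iff hD]
    linear_combination (2 * (-1) ^ (r + 1) * 5 * (fibZ r : ℝ)) * hFsum + 2 * hFclosed
end

section
/- Let r be a nonzero integer and n a non-negative integer. If r is even, then Σ_{j=0}^{n} L_{2r}^j·2^{n−j+1} = Σ_{j=0}^{n} (L_r²/2)^j (L_{2r}^{n−j} + 2^{n−j}) = 2(L_{2r}^{n+1} − 2^{n+1})/(5F_r²). If r is odd, then Σ_{j=0}^{n} L_{2r}^j·2^{n−j+1} = Σ_{j=0}^{n} (5F_r²/2)^j (L_{2r}^{n−j} + 2^{n−j}) = 2(L_{2r}^{n+1} − 2^{n+1})/L_r². -/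
open Finset

lemma fibZ_natCast (m : ℕ) : fibZ (m : ℤ) = (Nat.fib m : ℤ) := by
  simp [fibZ]

lemma fibZ_neg (m : ℕ) : fibZ (-(m : ℤ)) = (-1) ^ (m + 1) * fibZ m := by
  rcases Nat.eq_zero_or_pos m with h | h
  · simp [h, fibZ]
  · rw [fibZ_natCast]
    have h0 : ¬ (0 ≤ -(m:ℤ)) := by omega
    simp [fibZ, h0, Int.natAbs_neg]

lemma lucZ_natCast (k : ℕ) : lucZ ((k+1 : ℕ) : ℤ) = (Nat.fib (k+2) : ℤ) + (Nat.fib k : ℤ) := by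
  have h1 : ((k+1:ℕ):ℤ) + 1 = ((k+2:ℕ):ℤ) := by push_cast; ring
  have h2 : ((k+1:ℕ):ℤ) - 1 = ((k:ℕ):ℤ) := by push_cast; ring
  rw [lucZ, h1, h2, fibZ_natCast, fibZ_natCast]

lemma lucZ_neg (m : ℕ) : lucZ (-(m:ℤ)) = (-1)^m * lucZ m := by
  rcases Nat.eq_zero_or_pos m with h | h
  · simp [h]
  · obtain ⟨k, rfl⟩ : ∃ k, m = k + 1 := ⟨m - 1, by omega⟩
    have h1 : -((k+1:ℕ):ℤ) + 1 = -((k:ℕ):ℤ) := by push_cast; ring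
    have h2 : -((k+1:ℕ):ℤ) - 1 = -((k+2:ℕ):ℤ) := by push_cast; ring
    rw [lucZ, h1, h2, fibZ_neg, fibZ_neg, lucZ_natCast, fibZ_natCast, fibZ_natCast]
    ring

lemma cassini (k : ℕ) : (Nat.fib (k+2) : ℤ) * Nat.fib k = (Nat.fib (k+1):ℤ)^2 + (-1)^(k+1) := by
  induction k with
  | zero => simp
  | succ k ih =>
    have h : (Nat.fib (k+3) : ℤ) = Nat.fib (k+1) + Nat.fib (k+2) := by
      rw [show k+3 = (k+1)+2 from rfl, Nat.fib_add_two]; push_cast; ring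
    have h2 : (Nat.fib (k+2) : ℤ) = Nat.fib k + Nat.fib (k+1) := by
      rw [Nat.fib_add_two]; push_cast; ring
    rw [h]
    linear_combination (-1) * ih - (Nat.fib (k+2):ℤ) * h2

lemma fib_double (k : ℕ) : (Nat.fib (2*k+1) : ℤ) = (Nat.fib k:ℤ)^2 + (Nat.fib (k+1):ℤ)^2 := by
  have := Nat.fib_add k k
  rw [show k + k + 1 = 2*k+1 by ring] at this
  rw [this]; push_cast; ring

-- A: lucZ (2m) = lucZ m ^ 2 - 2 * (-1)^m, for m = k+1
lemma factA (k : ℕ) : lucZ (2 * ((k+1:ℕ):ℤ)) = lucZ ((k+1:ℕ):ℤ)^2 - 2*(-1)^(k+1) := by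
  have h2 : 2 * ((k+1:ℕ):ℤ) = ((2*k+1+1:ℕ):ℤ) := by push_cast; ring
  rw [h2, lucZ_natCast, lucZ_natCast]
  have e1 : (Nat.fib (2*k+1+2) : ℤ) = (Nat.fib (k+1):ℤ)^2 + (Nat.fib (k+2):ℤ)^2 := by
    have := fib_double (k+1); rw [show 2*(k+1)+1 = 2*k+1+2 by ring] at this; exact this
  have e2 := fib_double k
  rw [e1, e2]
  have := cassini k
  nlinarith [this]

-- B: 5 * fibZ m ^2 = lucZ m ^2 - 4 * (-1)^m, for m = k+1
lemma factB (k : ℕ) : 5 * fibZ ((k+1:ℕ):ℤ)^2 = lucZ ((k+1:ℕ):ℤ)^2 - 4*(-1)^(k+1) := by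
  rw [lucZ_natCast, fibZ_natCast]
  have h2 : (Nat.fib (k+2) : ℤ) = Nat.fib k + Nat.fib (k+1) := by
    rw [Nat.fib_add_two]; push_cast; ring
  have := cassini k
  nlinarith [this, h2]

lemma lucZ_pos (k : ℕ) : 0 < lucZ ((k+1:ℕ):ℤ) := by
  rw [lucZ_natCast]
  have := Nat.fib_pos.mpr (show 0 < k+2 by omega)
  positivity

lemma fibZ_pos (k : ℕ) : 0 < fibZ ((k+1:ℕ):ℤ) := by
  rw [fibZ_natCast]
  exact_mod_cast Nat.fib_pos.mpr (show 0 < k+1 by omega)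

lemma geom_div (x y : ℚ) (h : x ≠ y) (n : ℕ) :
    ∑ j ∈ Finset.range (n+1), x ^ j * y ^ (n - j) = (x^(n+1) - y^(n+1)) / (x - y) := by
  rw [eq_div_iff (by exact sub_ne_zero.mpr h)]
  have := geom_sum₂_mul x y (n+1)
  simpa using this

lemma core (x : ℚ) (h2 : x ≠ 2) (n : ℕ) :
    (∑ j ∈ Finset.range (n + 1), x ^ j * 2 ^ (n - j + 1)
      = ∑ j ∈ Finset.range (n + 1), ((x+2)/2) ^ j * (x ^ (n - j) + 2 ^ (n - j))) ∧
    (∑ j ∈ Finset.range (n + 1), x ^ j * 2 ^ (n - j + 1)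
      = 2 * (x ^ (n+1) - 2 ^ (n+1)) / (x - 2)) := by
  have a := (x+2)/2
  have hax : (x+2)/2 ≠ x := fun h => h2 (by linarith [div_eq_iff (show (2:ℚ) ≠ 0 by norm_num) |>.mp h])
  have ha2 : (x+2)/2 ≠ 2 := fun h => h2 (by linarith [div_eq_iff (show (2:ℚ) ≠ 0 by norm_num) |>.mp h])
  have hL : ∑ j ∈ Finset.range (n + 1), x ^ j * 2 ^ (n - j + 1)
      = 2 * ((x^(n+1) - 2^(n+1)) / (x - 2)) := by
    rw [← geom_div x 2 h2 n, Finset.mul_sum]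
    refine Finset.sum_congr rfl fun j hj => ?_
    rw [pow_succ]; ring
  have hR : ∑ j ∈ Finset.range (n + 1), ((x+2)/2) ^ j * (x ^ (n - j) + 2 ^ (n - j))
      = (((x+2)/2)^(n+1) - x^(n+1)) / ((x+2)/2 - x)
        + (((x+2)/2)^(n+1) - 2^(n+1)) / ((x+2)/2 - 2) := by
    rw [← geom_div _ x hax n, ← geom_div _ 2 ha2 n, ← Finset.sum_add_distrib]
    refine Finset.sum_congr rfl fun j hj => ?_
    ring
  constructor
  · rw [hL, hR]
    have hx2 : x - 2 ≠ 0 := sub_ne_zero.mpr h2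
    have h1 : (x+2)/2 - x = (2 - x)/2 := by ring
    have h3 : (x+2)/2 - 2 = (x - 2)/2 := by ring
    have hx2' : (2:ℚ) - x ≠ 0 := fun h => h2 (by linarith)
    rw [h1, h3]
    rw [div_div_eq_mul_div, div_div_eq_mul_div, div_pow]
    field_simp
    ring
  · rw [hL]; ring

lemma main_pos (k : ℕ) (n : ℕ) :
    (Even ((k+1:ℕ):ℤ) →
      ((∑ j ∈ Finset.range (n + 1), (lucZ (2 * ((k+1:ℕ):ℤ)) : ℚ) ^ j * 2 ^ (n - j + 1)
        = ∑ j ∈ Finset.range (n + 1),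
            ((lucZ ((k+1:ℕ):ℤ) : ℚ) ^ 2 / 2) ^ j
              * ((lucZ (2 * ((k+1:ℕ):ℤ)) : ℚ) ^ (n - j) + 2 ^ (n - j))) ∧
      (∑ j ∈ Finset.range (n + 1), (lucZ (2 * ((k+1:ℕ):ℤ)) : ℚ) ^ j * 2 ^ (n - j + 1)
        = 2 * ((lucZ (2 * ((k+1:ℕ):ℤ)) : ℚ) ^ (n + 1) - 2 ^ (n + 1))
            / (5 * (fibZ ((k+1:ℕ):ℤ) : ℚ) ^ 2)))) ∧
    (Odd ((k+1:ℕ):ℤ) →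
      ((∑ j ∈ Finset.range (n + 1), (lucZ (2 * ((k+1:ℕ):ℤ)) : ℚ) ^ j * 2 ^ (n - j + 1)
        = ∑ j ∈ Finset.range (n + 1),
            (5 * (fibZ ((k+1:ℕ):ℤ) : ℚ) ^ 2 / 2) ^ j
              * ((lucZ (2 * ((k+1:ℕ):ℤ)) : ℚ) ^ (n - j) + 2 ^ (n - j))) ∧
      (∑ j ∈ Finset.range (n + 1), (lucZ (2 * ((k+1:ℕ):ℤ)) : ℚ) ^ j * 2 ^ (n - j + 1)
        = 2 * ((lucZ (2 * ((k+1:ℕ):ℤ)) : ℚ) ^ (n + 1) - 2 ^ (n + 1))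
            / (lucZ ((k+1:ℕ):ℤ) : ℚ) ^ 2))) := by
  set x : ℚ := (lucZ (2 * ((k+1:ℕ):ℤ)) : ℚ) with hx
  set L : ℚ := (lucZ ((k+1:ℕ):ℤ) : ℚ) with hLdef
  set F : ℚ := (fibZ ((k+1:ℕ):ℤ) : ℚ) with hFdef
  have hA : x = L^2 - 2*(-1:ℚ)^(k+1) := by
    rw [hx, hLdef]; exact_mod_cast congrArg (fun z : ℤ => (z:ℚ)) (factA k)
  have hB : 5 * F^2 = L^2 - 4*(-1:ℚ)^(k+1) := by
    rw [hFdef, hLdef]; exact_mod_cast congrArg (fun z : ℤ => (z:ℚ)) (factB k)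
  have hLpos : 0 < L := by rw [hLdef]; exact_mod_cast lucZ_pos k
  have hFpos : 0 < F := by rw [hFdef]; exact_mod_cast fibZ_pos k
  constructor
  · intro hev
    have hke : Even (k+1) := (Int.even_coe_nat (k+1)).mp hev
    have hsign : ((-1:ℚ))^(k+1) = 1 := hke.neg_one_pow
    rw [hsign] at hA hB
    have hxs : 5 * F^2 = x - 2 := by rw [hA]; linarith [hB]
    have hL2 : L^2 = x + 2 := by rw [hA]; ring
    have hx2 : x ≠ 2 := by nlinarith [hFpos, hxs]
    obtain ⟨c1, c2⟩ := core x hx2 n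
    refine ⟨?_, ?_⟩
    · rw [c1, ← hL2]
    · rw [c2, hxs]
  · intro hodd
    have hko : Odd (k+1) := (Int.odd_coe_nat (k+1)).mp hodd
    have hsign : ((-1:ℚ))^(k+1) = -1 := hko.neg_one_pow
    rw [hsign] at hA hB
    have hL2 : L^2 = x - 2 := by rw [hA]; ring
    have hxs : 5 * F^2 = x + 2 := by linarith [hB, hL2]
    have hx2 : x ≠ 2 := by nlinarith [hLpos, hL2]
    obtain ⟨c1, c2⟩ := core x hx2 n
    refine ⟨?_, ?_⟩
    · rw [c1, ← hxs]
    · rw [c2, ← hL2]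

theorem thm5_parity_sums (r : ℤ) (hr : r ≠ 0) (n : ℕ) :
    (Even r →
      ((∑ j ∈ Finset.range (n + 1), (lucZ (2 * r) : ℚ) ^ j * 2 ^ (n - j + 1)
        = ∑ j ∈ Finset.range (n + 1),
            ((lucZ r : ℚ) ^ 2 / 2) ^ j
              * ((lucZ (2 * r) : ℚ) ^ (n - j) + 2 ^ (n - j))) ∧
      (∑ j ∈ Finset.range (n + 1), (lucZ (2 * r) : ℚ) ^ j * 2 ^ (n - j + 1)
        = 2 * ((lucZ (2 * r) : ℚ) ^ (n + 1) - 2 ^ (n + 1))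
            / (5 * (fibZ r : ℚ) ^ 2)))) ∧
    (Odd r →
      ((∑ j ∈ Finset.range (n + 1), (lucZ (2 * r) : ℚ) ^ j * 2 ^ (n - j + 1)
        = ∑ j ∈ Finset.range (n + 1),
            (5 * (fibZ r : ℚ) ^ 2 / 2) ^ j
              * ((lucZ (2 * r) : ℚ) ^ (n - j) + 2 ^ (n - j))) ∧
      (∑ j ∈ Finset.range (n + 1), (lucZ (2 * r) : ℚ) ^ j * 2 ^ (n - j + 1)
        = 2 * ((lucZ (2 * r) : ℚ) ^ (n + 1) - 2 ^ (n + 1))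
            / (lucZ r : ℚ) ^ 2))) := by
  obtain ⟨k, hk⟩ : ∃ k : ℕ, r.natAbs = k + 1 := ⟨r.natAbs - 1, by omega⟩
  rcases Int.natAbs_eq r with h | h
  · rw [h, hk]; exact main_pos k n
  · rw [h, hk]
    have e1 : lucZ (2 * -((k+1:ℕ):ℤ)) = lucZ (2 * ((k+1:ℕ):ℤ)) := by
      have h2 : 2 * -((k+1:ℕ):ℤ) = -((2*(k+1):ℕ):ℤ) := by push_cast; ring
      have h3 : ((2*(k+1):ℕ):ℤ) = 2 * ((k+1:ℕ):ℤ) := by push_cast; ring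
      rw [h2, lucZ_neg, Even.neg_one_pow ⟨k+1, by ring⟩, one_mul, h3]
    have e2 : (fibZ (-((k+1:ℕ):ℤ)) : ℚ)^2 = (fibZ ((k+1:ℕ):ℤ) : ℚ)^2 := by
      have : (fibZ (-((k+1:ℕ):ℤ)))^2 = (fibZ ((k+1:ℕ):ℤ))^2 := by
        rw [fibZ_neg, mul_pow, ← pow_mul, Even.neg_one_pow ⟨k+2, by ring⟩, one_mul]
      exact_mod_cast this
    have e3 : (lucZ (-((k+1:ℕ):ℤ)) : ℚ)^2 = (lucZ ((k+1:ℕ):ℤ) : ℚ)^2 := by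
      have : (lucZ (-((k+1:ℕ):ℤ)))^2 = (lucZ ((k+1:ℕ):ℤ))^2 := by
        rw [lucZ_neg, mul_pow, ← pow_mul, Even.neg_one_pow ⟨k+1, by ring⟩, one_mul]
      exact_mod_cast this
    simp only [e1, e2, e3, even_neg, odd_neg]
    exact main_pos k n
end
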